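/- (Expansion of x^n in q-Bernoulli polynomials.) For every integer n ≥ 1 and all x ∈ ℂ: x^n = (2^n / ((−1;q)_n [n+1]_q)) · Σ_{k=0}^{n} [n+1 choose k]_q ((−1;q)_{n+1−k}/2^{n+1−k}) B_{k,q}(x). (This is the q-analogue of x^n = (1/(n+1)) Σ_{k=0}^{n} C(n+1,k) B_k(x).) -/

import Mathlib

open Finset PowerSeries

/-- The `q`-number `[n]_q = (1 - q^n)/(1 - q)`. -/
noncomputable def qNum (q : ℂ) (n : ℕ) : ℂ := (1 - q ^ n) / (1 - q)

/-- The `q`-factorial `[n]_q!`. -/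
noncomputable def qFact (q : ℂ) : ℕ → ℂ
  | 0 => 1
  | n + 1 => qNum q (n + 1) * qFact q n

/-- The `q`-shifted factorial `(a; q)_n = ∏_{j=0}^{n-1} (1 - q^j a)`. -/
noncomputable def qShift (a q : ℂ) (n : ℕ) : ℂ := ∏ j ∈ Finset.range n, (1 - q ^ j * a)

/-- The Gaussian binomial coefficient `[n choose k]_q = (q;q)_n / ((q;q)_{n-k} (q;q)_k)`. -/
noncomputable def qBinom (q : ℂ) (n k : ℕ) : ℂ :=
  qShift q q n / (qShift q q (n - k) * qShift q q k)

/-- The formal power series (in `t`) `𝓔_q(tx) = Σ_{n≥0} (-1;q)_n (x)^n t^n / (2^n [n]_q!)`. -/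
noncomputable def qExp (q x : ℂ) : PowerSeries ℂ :=
  PowerSeries.mk fun n => qShift (-1) q n * x ^ n / (2 ^ n * qFact q n)

/-- The generating series `Σ_{n≥0} a_n t^n / [n]_q!` of a sequence `a`. -/
noncomputable def qGen (q : ℂ) (a : ℕ → ℂ) : PowerSeries ℂ :=
  PowerSeries.mk fun n => a n / qFact q n

/-- The `q`-addition `(x ⊕_q y)^n`. -/
noncomputable def qAdd (q x y : ℂ) (n : ℕ) : ℂ :=
  ∑ k ∈ Finset.range (n + 1),
    qBinom q n k * (qShift (-1) q k * qShift (-1) q (n - k) / 2 ^ n) * x ^ k * y ^ (n - k)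

/-!
Put `y = 0`, so that `𝓔_q(ty) = 1`, and compare the coefficients of `t^(n+1)` in
`(Σ B_{k,q}(x) t^k/[k]_q!) · (𝓔_q(t) - 1) = t · 𝓔_q(tx)`. Since `𝓔_q(t) - 1` has no constant
term, the left side is a `q`-binomial convolution of `B_{0,q}(x), …, B_{n,q}(x)`, and the right side
is `(-1;q)_n x^n / (2^n [n]_q!)`; solving for `x^n` gives the formula. The condition `|q| < 1`
keeps `[n+1]_q`, `[n]_q!` and `(-1;q)_n` nonzero.
-/

lemma norm_pow_lt_one {q : ℂ} (hq : ‖q‖ < 1) {m : ℕ} (hm : m ≠ 0) : ‖q ^ m‖ < 1 := by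
  rw [norm_pow]
  exact pow_lt_one₀ (norm_nonneg q) hq hm

lemma pow_ne_one_of_norm_lt_one {q : ℂ} (hq : ‖q‖ < 1) {m : ℕ} (hm : m ≠ 0) : q ^ m ≠ 1 := by
  intro h
  simpa [h] using norm_pow_lt_one hq hm

lemma pow_ne_neg_one_of_norm_lt_one {q : ℂ} (hq : ‖q‖ < 1) {m : ℕ} (hm : m ≠ 0) :
    q ^ m ≠ -1 := by
  intro h
  simpa [h] using norm_pow_lt_one hq hm

lemma one_sub_mul_qNum (q : ℂ) (n : ℕ) : (1 - q) * qNum q n = 1 - q ^ n := by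
  rcases eq_or_ne q 1 with rfl | hq
  · simp
  · rw [qNum, mul_div_cancel₀ _ (sub_ne_zero.mpr hq.symm)]

lemma qFact_succ (q : ℂ) (n : ℕ) : qFact q (n + 1) = qNum q (n + 1) * qFact q n := rfl

lemma qNum_ne_zero {q : ℂ} (hq : ‖q‖ < 1) {m : ℕ} (hm : m ≠ 0) : qNum q m ≠ 0 := by
  intro h
  have := one_sub_mul_qNum q m
  rw [h, mul_zero, eq_comm, sub_eq_zero] at this
  exact pow_ne_one_of_norm_lt_one hq hm this.symm

lemma qFact_ne_zero {q : ℂ} (hq : ‖q‖ < 1) (m : ℕ) : qFact q m ≠ 0 := by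
  induction m with
  | zero => simp [qFact]
  | succ k ih => exact mul_ne_zero (qNum_ne_zero hq k.succ_ne_zero) ih

lemma qShift_neg_one_ne_zero {q : ℂ} (hq : ‖q‖ < 1) (m : ℕ) : qShift (-1) q m ≠ 0 := by
  refine prod_ne_zero_iff.mpr fun j _ => ?_
  rcases Nat.eq_zero_or_pos j with rfl | hj
  · norm_num
  · intro h
    exact pow_ne_neg_one_of_norm_lt_one hq hj.ne' (by linear_combination h)

lemma qShift_self (q : ℂ) (m : ℕ) : qShift q q m = (1 - q) ^ m * qFact q m := by
  induction m with
  | zero => simp [qShift, qFact]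
  | succ k ih =>
    rw [qShift, prod_range_succ, ← qShift, ih, qFact_succ, pow_succ]
    linear_combination (-(1 - q) ^ k * qFact q k) * one_sub_mul_qNum q (k + 1)

lemma qBinom_eq_qFact_div {q : ℂ} (hq : q ≠ 1) {m k : ℕ} (hk : k ≤ m) :
    qBinom q m k = qFact q m / (qFact q (m - k) * qFact q k) := by
  have hpow : (1 - q) ^ m = (1 - q) ^ (m - k) * (1 - q) ^ k := by
    rw [← pow_add, Nat.sub_add_cancel hk]
  have hc : (1 - q) ^ (m - k) * (1 - q) ^ k ≠ 0 := by
    rw [← hpow]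
    exact pow_ne_zero _ (sub_ne_zero.mpr hq.symm)
  rw [qBinom, qShift_self, qShift_self, qShift_self, hpow,
    mul_mul_mul_comm ((1 - q) ^ (m - k)) (qFact q (m - k)), mul_div_mul_left _ _ hc]

lemma qExp_zero (q : ℂ) : qExp q 0 = 1 := by
  ext (_ | _) <;> simp [qExp, qShift, qFact]

lemma coeff_succ_mul_of_constantCoeff_eq_zero {R : Type*} [CommSemiring R] (f g : R⟦X⟧)
    (hg : constantCoeff g = 0) (n : ℕ) :
    coeff (n + 1) (f * g) = ∑ k ∈ range (n + 1), coeff k f * coeff (n + 1 - k) g := by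
  rw [coeff_mul, Nat.sum_antidiagonal_eq_sum_range_succ_mk, sum_range_succ]
  simp [hg]

lemma qFact_mul_coeff_succ_qGen_mul_qExp_one_sub_one {q : ℂ} (hq : q ≠ 1) (a : ℕ → ℂ) (n : ℕ) :
    qFact q (n + 1) * coeff (n + 1) (qGen q a * (qExp q 1 - 1)) =
      ∑ k ∈ range (n + 1),
        qBinom q (n + 1) k * (qShift (-1) q (n + 1 - k) / 2 ^ (n + 1 - k)) * a k := by
  rw [coeff_succ_mul_of_constantCoeff_eq_zero _ _ (by simp [qExp, qShift, qFact]), mul_sum]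
  refine sum_congr rfl fun k hk => ?_
  have hk : k < n + 1 := mem_range.mp hk
  rw [qBinom_eq_qFact_div hq hk.le]
  simp only [qGen, qExp, coeff_mk, map_sub, coeff_one, if_neg (Nat.sub_ne_zero_of_lt hk),
    one_pow, mul_one, sub_zero]
  ring

theorem pow_eq_sum_qBernoulli_general (q : ℂ) (hq1 : ‖q‖ < 1)
    (B : ℂ → ℂ → ℕ → ℂ)
    (hB : ∀ x y : ℂ, qGen q (B x y) * (qExp q 1 - 1) = PowerSeries.X * qExp q x * qExp q y)
    (n : ℕ) (x : ℂ) :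
    x ^ n = 2 ^ n / (qShift (-1) q n * qNum q (n + 1)) *
      ∑ k ∈ Finset.range (n + 1),
        qBinom q (n + 1) k * (qShift (-1) q (n + 1 - k) / 2 ^ (n + 1 - k)) * B x 0 k := by
  have hq : q ≠ 1 := by simpa using pow_ne_one_of_norm_lt_one hq1 one_ne_zero
  have hgen : qGen q (B x 0) * (qExp q 1 - 1) = X * qExp q x := by
    simpa [qExp_zero] using hB x 0
  rw [← qFact_mul_coeff_succ_qGen_mul_qExp_one_sub_one hq, hgen, coeff_succ_X_mul, qExp,
    coeff_mk, qFact_succ]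
  have hS := qShift_neg_one_ne_zero hq1 n
  have hN := qNum_ne_zero hq1 n.succ_ne_zero
  have hF := qFact_ne_zero hq1 n
  field_simp

/-- Expansion of `x^n` in `q`-Bernoulli polynomials:
`x^n = (2^n/((-1;q)_n [n+1]_q)) Σ_{k=0}^n [n+1 choose k]_q ((-1;q)_{n+1-k}/2^{n+1-k}) B_{k,q}(x)`. -/
theorem pow_eq_sum_qBernoulli (q : ℂ) (hq0 : 0 < ‖q‖) (hq1 : ‖q‖ < 1)
    (B : ℂ → ℂ → ℕ → ℂ)
    (hB : ∀ x y : ℂ, qGen q (B x y) * (qExp q 1 - 1) = PowerSeries.X * qExp q x * qExp q y)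
    (n : ℕ) (hn : 1 ≤ n) (x : ℂ) :
    x ^ n = 2 ^ n / (qShift (-1) q n * qNum q (n + 1)) *
      ∑ k ∈ Finset.range (n + 1),
        qBinom q (n + 1) k * (qShift (-1) q (n + 1 - k) / 2 ^ (n + 1 - k)) * B x 0 k :=
  pow_eq_sum_qBernoulli_general q hq1 B hB n x
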